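/- In the uncertainty map M_n used for the QBF reduction, for every sequence of actions σ = A_1...A_i with 1 ≤ i ≤ n, where each A_k is either a_k or ā_k, the updated uncertainty set is U|^σ = {x_0, X_1, ..., X_i}, where X_k = x_k if A_k = a_k and X_k = x̄_k if A_k = ā_k, for each 1 ≤ k ≤ i. -/

import Mathlib

/-! Besides the loops, the action `A_{k+1}` only has edges from the states of level `k` into
`X_{k+1}`. After the first `k` updates the uncertainty set is `{x_0, X_1, …, X_k}`, which contains a
state of level `k`, so the next update simply adds `X_{k+1}`. -/

mutual
/-- Formulas of EPDL. -/
inductive EForm (P A : Type) : Type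
  | top : EForm P A
  | atom : P → EForm P A
  | neg : EForm P A → EForm P A
  | and : EForm P A → EForm P A → EForm P A
  | box : EProg P A → EForm P A → EForm P A
  | know : EForm P A → EForm P A
/-- Programs of EPDL. -/
inductive EProg (P A : Type) : Type
  | act : A → EProg P A
  | test : EForm P A → EProg P A
  | seq : EProg P A → EProg P A → EProg P A
  | choice : EProg P A → EProg P A → EProg P A
  | star : EProg P A → EProg P A
end

namespace EForm
variable {P A : Type}
/-- φ ∨ ψ := ¬(¬φ ∧ ¬ψ) -/
def or (φ ψ : EForm P A) : EForm P A := neg (and (neg φ) (neg ψ))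
/-- φ → ψ := ¬φ ∨ ψ -/
def imp (φ ψ : EForm P A) : EForm P A := or (neg φ) ψ
def iff (φ ψ : EForm P A) : EForm P A := and (imp φ ψ) (imp ψ φ)
/-- ⟨π⟩φ := ¬[π]¬φ -/
def dia (π : EProg P A) (φ : EForm P A) : EForm P A := neg (box π (neg φ))
/-- ⦗π⦘φ := [π]φ ∧ ⟨π⟩φ -/
def bbox (π : EProg P A) (φ : EForm P A) : EForm P A := and (box π φ) (dia π φ)
/-- K̂φ := ¬K¬φ -/
def hatK (φ : EForm P A) : EForm P A := neg (know (neg φ))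
end EForm

/-- A Kripke model with labelled relations. -/
structure Kripke (P A : Type) where
  S : Type
  R : A → S → S → Prop
  V : S → P → Prop

namespace Kripke
variable {P A : Type}
/-- U|^a -/
def img (N : Kripke P A) (a : A) (U : Set N.S) : Set N.S := {t | ∃ u ∈ U, N.R a u t}
/-- Iterated update U|^σ along a sequence of actions. -/
def updU (N : Kripke P A) : Set N.S → List A → Set N.S
  | U, [] => U
  | U, a :: σ => N.updU (N.img a U) σ
end Kripke

mutual
/-- Truth of an EPDL formula at a pointed uncertainty map, represented by the
(fixed) Kripke model `N`, an uncertainty set `U` and a state `s`. -/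
def eSat {P A : Type} (N : Kripke P A) : Set N.S → N.S → EForm P A → Prop
  | _, _, .top => True
  | _, s, .atom p => N.V s p
  | U, s, .neg φ => ¬ eSat N U s φ
  | U, s, .and φ ψ => eSat N U s φ ∧ eSat N U s ψ
  | U, s, .box π φ => ∀ c : Set N.S × N.S, eRel N π (U, s) c → eSat N c.1 c.2 φ
  | U, _, .know φ => ∀ u ∈ U, eSat N U u φ
/-- The relation ⟦π⟧ between pointed uncertainty maps (over a fixed Kripke model
`N`, a pointed uncertainty map is a pair of an uncertainty set and a state). -/
def eRel {P A : Type} (N : Kripke P A) : EProg P A → Set N.S × N.S → Set N.S × N.S → Prop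
  | .act a, c, c' => c'.1 = N.img a c.1 ∧ N.R a c.2 c'.2
  | .test ψ, c, c' => c' = c ∧ eSat N c.1 c.2 ψ
  | .seq π₁ π₂, c, c' => ∃ d, eRel N π₁ c d ∧ eRel N π₂ d c'
  | .choice π₁ π₂, c, c' => eRel N π₁ c c' ∨ eRel N π₂ c c'
  | .star π, c, c' => Relation.ReflTransGen (fun x y => eRel N π x y) c c'
end

/-- Validity: truth at every pointed uncertainty map. -/
def eValid {P A : Type} (φ : EForm P A) : Prop :=
  ∀ (N : Kripke P A) (U : Set N.S), U.Nonempty → ∀ s ∈ U, eSat N U s φ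

/-- Proposition letters for the QBF reduction: `(true, k)` is p_{k+1} and
`(false, k)` is q_{k+1}. -/
abbrev QP : Type := Bool × ℕ

/-- Action symbols for the QBF reduction: `(true, k)` is a_{k+1} and
`(false, k)` is ā_{k+1}. -/
abbrev QA : Type := Bool × ℕ

/-- States of M_n: `none` is x_0, `some (true, k)` is x_{k+1} and
`some (false, k)` is x̄_{k+1}, where k+1 ≤ n. -/
def QS (n : ℕ) : Type := {v : Option (Bool × ℕ) // ∀ b k, v = some (b, k) → k < n}

/-- The level of a state: x_0 has level 0, x_i and x̄_i have level i. -/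
def levelOf {n : ℕ} (s : QS n) : ℕ :=
  match s.val with
  | none => 0
  | some (_, k) => k + 1

/-- The uncertainty map M_n (its underlying Kripke model): the action a_{k+1}
(resp. ā_{k+1}), i.e. `(true,k)` (resp. `(false,k)`), is the identity on all
states together with the edges from the two states of level k to x_{k+1}
(resp. x̄_{k+1}); p_{k+1} holds exactly at x_{k+1} and q_{k+1} exactly at x̄_{k+1}. -/
def MnK (n : ℕ) : Kripke QP QA where
  S := QS n
  R := fun a s t => s = t ∨ (levelOf s = a.2 ∧ t.val = some (a.1, a.2))
  V := fun s p => s.val = some p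

/-- The initial uncertainty set U = {x_0}. -/
def Un (n : ℕ) : Set (QS n) := {s | s.val = none}

/-- The initial state x_0. -/
def x0 (n : ℕ) : QS n := ⟨none, fun _ _ h => by cases h⟩

namespace Kripke

variable {P A : Type} (N : Kripke P A)

theorem updU_append (U : Set N.S) (σ τ : List A) :
    N.updU U (σ ++ τ) = N.updU (N.updU U σ) τ := by
  induction σ generalizing U with
  | nil => rfl
  | cons a σ ih => exact ih _

theorem updU_concat (U : Set N.S) (σ : List A) (a : A) :
    N.updU U (σ ++ [a]) = N.img a (N.updU U σ) := by
  rw [updU_append]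
  rfl

end Kripke

theorem MnK_img_of_exists_levelOf {n : ℕ} {X : Set (QS n)} {a : QA}
    (h : ∃ s ∈ X, levelOf s = a.2) :
    (MnK n).img a X = X ∪ {t | t.val = some a} := by
  ext t
  constructor
  · rintro ⟨u, hu, rfl | ⟨-, ht⟩⟩
    · exact Or.inl hu
    · exact Or.inr ht
  · rintro (ht | ht)
    · exact ⟨t, ht, Or.inl rfl⟩
    · obtain ⟨s, hs, hlevel⟩ := h
      exact ⟨s, hs, Or.inr ⟨hlevel, ht⟩⟩

/-- The set `{x_0, X_1, …, X_i}`, where `X_{k+1}` is `x_{k+1}` or `x̄_{k+1}` according to `c k`. -/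
def chosenStates (n i : ℕ) (c : ℕ → Bool) : Set (QS n) :=
  {s | s.val = none ∨ ∃ k < i, s.val = some (c k, k)}

theorem chosenStates_succ (n i : ℕ) (c : ℕ → Bool) :
    chosenStates n (i + 1) c = chosenStates n i c ∪ {t | t.val = some (c i, i)} := by
  ext s
  simp only [chosenStates, Set.mem_union, Set.mem_ofPred_eq, Nat.lt_succ_iff_lt_or_eq,
    or_and_right, exists_or, exists_eq_left, or_assoc]

theorem exists_levelOf_mem_chosenStates {n i : ℕ} (c : ℕ → Bool) (hi : i < n) :
    ∃ s ∈ chosenStates n i c, levelOf s = i := by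
  cases i with
  | zero => exact ⟨x0 n, Or.inl rfl, rfl⟩
  | succ m =>
    refine ⟨⟨some (c m, m), ?_⟩, Or.inr ⟨m, m.lt_succ_self, rfl⟩, rfl⟩
    rintro b k ⟨⟩
    omega

theorem updU_Un_MnK (n i : ℕ) (c : ℕ → Bool) (hi : i ≤ n) :
    (MnK n).updU (Un n) ((List.range i).map fun k => ((c k, k) : QA)) = chosenStates n i c := by
  induction i with
  | zero =>
    ext s
    simp [Kripke.updU, Un, chosenStates]
  | succ i ih =>
    rw [List.range_succ, List.map_append, List.map_singleton, (MnK n).updU_concat (Un n),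
      ih (by omega), MnK_img_of_exists_levelOf (exists_levelOf_mem_chosenStates c hi),
      chosenStates_succ]

/-- In the uncertainty map M_n used for the QBF reduction, for every
sequence of actions σ = A_1...A_i with 1 ≤ i ≤ n, where each A_k is either a_k or
ā_k (here A_k is encoded as `(c (k-1), k-1)` for a choice function c), the updated
uncertainty set is U|^σ = {x_0, X_1, ..., X_i}, where X_k = x_k if A_k = a_k and
X_k = x̄_k if A_k = ā_k. -/
theorem qbf_uncertainty_update (n i : ℕ) (c : ℕ → Bool) (h1 : 1 ≤ i) (h2 : i ≤ n) :
    (MnK n).updU (Un n) ((List.range i).map fun k => ((c k, k) : QA)) =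
      {s : QS n | s.val = none ∨ ∃ k < i, s.val = some (c k, k)} :=
  updU_Un_MnK n i c h2
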